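/- Let X be an n×p matrix, M a set of column indices with |M| = k such that the columns of X indexed by M are linearly independent, and M' ⊂ M with |M'| = k'. Let X_M denote the n×k submatrix of columns in M, and let Λ = G'(X_M' X_M)^{-1} G, where G is the k×(k−k') selection matrix for the coordinates in M∖M'. Then for any coefficient vector β supported on M, the squared Euclidean distance from Xβ to the column span of X_{M'} equals β_{M∖M'}' Λ^{-1} β_{M∖M'}, where β_{M∖M'} is the subvector of β indexed by M∖M'. -/

import Mathlib

open Matrix
open scoped BigOperators

lemma posDef_gram {n : ℕ} {m : Type*} [Fintype m] [DecidableEq m]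
    (Y : Matrix (Fin n) m ℝ)
    (h : LinearIndependent ℝ (fun j : m => fun i : Fin n => Y i j)) :
    (Yᵀ * Y).PosDef := by
  have herm : (Yᵀ * Y).IsHermitian := by
    have := Matrix.isHermitian_conjTranspose_mul_self Y
    simpa using this
  refine Matrix.posDef_iff_dotProduct_mulVec.mpr ⟨herm, fun x hx => ?_⟩
  have hmv : Y *ᵥ x = ∑ j, x j • (fun i => Y i j) := by
    ext i
    simp [Matrix.mulVec, dotProduct, Finset.sum_apply, mul_comm]
  have hY : Y *ᵥ x ≠ 0 := by
    intro h0
    apply hx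
    rw [hmv] at h0
    have := (Fintype.linearIndependent_iff.mp h) x h0
    funext j; exact this j
  have : star x ⬝ᵥ ((Yᵀ * Y) *ᵥ x) = (Y *ᵥ x) ⬝ᵥ (Y *ᵥ x) := by
    rw [star_trivial, ← Matrix.mulVec_mulVec, Matrix.dotProduct_mulVec,
      Matrix.vecMul_transpose]
  rw [this]
  obtain ⟨i, hi⟩ := Function.ne_iff.mp hY
  refine Finset.sum_pos' (fun i _ => mul_self_nonneg _) ⟨i, Finset.mem_univ i, ?_⟩
  simpa using mul_self_pos.mpr hi

/-- Bias identity: for `β` supported on `M`, the squared Euclidean distance from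
`Xβ` to the span of the columns of `X` indexed by `M' ⊂ M` equals
`β_{M∖M'}ᵀ Λ⁻¹ β_{M∖M'}`, where `Λ` is the `(M∖M')×(M∖M')` principal submatrix
of `(X_Mᵀ X_M)⁻¹`. -/
theorem projection_bias_identity {n p : ℕ} (X : Matrix (Fin n) (Fin p) ℝ)
    (M M' : Finset (Fin p)) (hM'M : M' ⊂ M)
    (hlin : LinearIndependent ℝ (fun j : {j // j ∈ M} => fun i : Fin n => X i j))
    (β : Fin p → ℝ) (hβ : ∀ j ∉ M, β j = 0)
    (Gram : Matrix {j // j ∈ M} {j // j ∈ M} ℝ)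
    (hGram : Gram = (X.submatrix id (fun j : {j // j ∈ M} => (j : Fin p)))ᵀ *
                      X.submatrix id (fun j : {j // j ∈ M} => (j : Fin p)))
    (Λ : Matrix {j // j ∈ M \ M'} {j // j ∈ M \ M'} ℝ)
    (hΛ : Λ = (Gram⁻¹).submatrix
        (fun j : {j // j ∈ M \ M'} =>
          (⟨(j : Fin p), (Finset.mem_sdiff.mp j.2).1⟩ : {j // j ∈ M}))
        (fun j : {j // j ∈ M \ M'} =>
          (⟨(j : Fin p), (Finset.mem_sdiff.mp j.2).1⟩ : {j // j ∈ M}))) :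
    sInf {d : ℝ | ∃ v ∈ Submodule.span ℝ
        (Set.range fun j : {j // j ∈ M'} => fun i : Fin n => X i j),
        d = ∑ i, (X.mulVec β i - v i) ^ 2} =
      (fun j : {j // j ∈ M \ M'} => β j) ⬝ᵥ
        (Λ⁻¹).mulVec (fun j : {j // j ∈ M \ M'} => β j) := by
  classical
  have hsub : M' ⊆ M := hM'M.subset
  let f' : {j // j ∈ M'} → {j // j ∈ M} := fun j => ⟨j, hsub j.2⟩
  let fS : {j // j ∈ M \ M'} → {j // j ∈ M} := fun j => ⟨j, (Finset.mem_sdiff.mp j.2).1⟩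
  let e : {j // j ∈ M'} ⊕ {j // j ∈ M \ M'} ≃ {j // j ∈ M} :=
    { toFun := Sum.elim f' fS
      invFun := fun j => if h : (j : Fin p) ∈ M' then Sum.inl ⟨j, h⟩
        else Sum.inr ⟨j, Finset.mem_sdiff.mpr ⟨j.2, h⟩⟩
      left_inv := by
        rintro (a | a)
        · simp [f']
        · have : (a : Fin p) ∉ M' := (Finset.mem_sdiff.mp a.2).2
          simp [fS, this]
      right_inv := by
        rintro ⟨j, hj⟩
        by_cases h : j ∈ M' <;> simp [h, f', fS] }
  let X' : Matrix (Fin n) {j // j ∈ M'} ℝ := X.submatrix id (fun j => (j : Fin p))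
  let XS : Matrix (Fin n) {j // j ∈ M \ M'} ℝ := X.submatrix id (fun j => (j : Fin p))
  let A := X'ᵀ * X'
  let B := X'ᵀ * XS
  let C := XSᵀ * X'
  let D := XSᵀ * XS
  have hblock : Gram.submatrix ⇑e ⇑e = fromBlocks A B C D := by
    subst hGram
    ext (a | a) (b | b) <;> rfl
  have hlin' : LinearIndependent ℝ (fun j : {j // j ∈ M'} => fun i : Fin n => X i j) := by
    have hinj : Function.Injective f' := fun a b hab => Subtype.ext (by have := congrArg Subtype.val hab; exact this)
    exact hlin.comp f' hinj
  have hGramPD : Gram.PosDef := by rw [hGram]; exact posDef_gram _ hlin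
  have hAPD : A.PosDef := posDef_gram _ hlin'
  haveI iG : Invertible Gram := hGramPD.isUnit.invertible
  haveI iA : Invertible A := hAPD.isUnit.invertible
  haveI iG2 : Invertible (fromBlocks A B C D) := hblock ▸ Gram.submatrixEquivInvertible e e
  haveI iS : Invertible (D - C * ⅟A * B) := Matrix.invertibleOfFromBlocks₁₁Invertible A B C D
  have hΛeq : Λ = ⅟(D - C * ⅟A * B) := by
    have h1 : (Gram.submatrix ⇑e ⇑e)⁻¹ = (Gram⁻¹).submatrix ⇑e ⇑e :=
      Matrix.inv_submatrix_equiv Gram e e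
    have h2 : (fromBlocks A B C D)⁻¹ = ⅟(fromBlocks A B C D) :=
      (Matrix.invOf_eq_nonsing_inv _).symm
    have h3 := Matrix.invOf_fromBlocks₁₁_eq A B C D
    ext s t
    have h4 : Λ s t = ((Gram⁻¹).submatrix ⇑e ⇑e) (Sum.inr s) (Sum.inr t) := by rw [hΛ]; rfl
    rw [h4, ← h1, hblock, h2, h3]; rfl
  have hΛinv : Λ⁻¹ = D - C * A⁻¹ * B := by
    have h5 : Λ * (D - C * ⅟A * B) = 1 := by rw [hΛeq]; exact invOf_mul_self _
    rw [Matrix.inv_eq_right_inv h5, Matrix.invOf_eq_nonsing_inv]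
  -- vectors
  let b : {j // j ∈ M \ M'} → ℝ := fun j => β j
  let β' : {j // j ∈ M'} → ℝ := fun j => β j
  let w0 : {j // j ∈ M'} → ℝ := A⁻¹ *ᵥ (B *ᵥ b)
  let r : Fin n → ℝ := XS *ᵥ b - X' *ᵥ w0
  let vstar : Fin n → ℝ := X' *ᵥ (β' + w0)
  have hu : X *ᵥ β = X' *ᵥ β' + XS *ᵥ b := by
    ext i
    have h1 : (X *ᵥ β) i = ∑ j : {j // j ∈ M}, X i (j : Fin p) * β (j : Fin p) := by
      rw [Finset.sum_coe_sort M (fun j => X i j * β j)]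
      exact (Finset.sum_subset (Finset.subset_univ M)
        (fun j _ hj => by rw [hβ j hj, mul_zero])).symm
    rw [h1, ← Equiv.sum_comp e (fun j : {j // j ∈ M} => X i (j : Fin p) * β (j : Fin p)),
      Fintype.sum_sum_type]
    rfl
  have hr' : ∀ i, X.mulVec β i - vstar i = r i := by
    intro i
    have h1 := congrFun hu i
    have h2 : vstar i = (X' *ᵥ β') i + (X' *ᵥ w0) i := by
      show (X' *ᵥ (β' + w0)) i = _
      rw [Matrix.mulVec_add]; rfl
    have h3 : r i = (XS *ᵥ b) i - (X' *ᵥ w0) i := rfl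
    have h4 : (X' *ᵥ β' + XS *ᵥ b) i = (X' *ᵥ β') i + (XS *ᵥ b) i := rfl
    rw [h2, h3]; rw [h4] at h1; linarith [h1]
  have horth : X'ᵀ *ᵥ r = 0 := by
    show X'ᵀ *ᵥ (XS *ᵥ b - X' *ᵥ w0) = 0
    rw [Matrix.mulVec_sub, Matrix.mulVec_mulVec, Matrix.mulVec_mulVec]
    show B *ᵥ b - (X'ᵀ * X') *ᵥ (A⁻¹ *ᵥ (B *ᵥ b)) = 0
    rw [Matrix.mulVec_mulVec]
    show B *ᵥ b - (A * A⁻¹) *ᵥ (B *ᵥ b) = 0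
    rw [Matrix.mul_inv_of_invertible, Matrix.one_mulVec, sub_self]
  have hperp : ∀ w ∈ Submodule.span ℝ
      (Set.range fun j : {j // j ∈ M'} => fun i : Fin n => X i (j : Fin p)),
      r ⬝ᵥ w = 0 := by
    intro w hw
    induction hw using Submodule.span_induction with
    | mem x hx =>
      obtain ⟨j, rfl⟩ := hx
      have h5 : r ⬝ᵥ (fun i => X i (j : Fin p)) = (X'ᵀ *ᵥ r) j := by
        simp [X', Matrix.mulVec, dotProduct, Matrix.transpose_apply, mul_comm]
      rw [h5, horth]
      simp
    | zero => simp
    | add x y _ _ hx hy => rw [dotProduct_add, hx, hy, add_zero]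
    | smul c x _ hx => rw [dotProduct_smul, hx, smul_zero]
  have hvstar_mem : vstar ∈ Submodule.span ℝ
      (Set.range fun j : {j // j ∈ M'} => fun i : Fin n => X i (j : Fin p)) := by
    have h6 : vstar = ∑ j : {j // j ∈ M'}, (β' + w0) j • (fun i => X i (j : Fin p)) := by
      ext i
      simp [vstar, X', Matrix.mulVec, dotProduct, Finset.sum_apply, mul_comm]
    rw [h6]
    exact Submodule.sum_mem _ fun j _ =>
      Submodule.smul_mem _ _ (Submodule.subset_span ⟨j, rfl⟩)
  have hrr : r ⬝ᵥ r = b ⬝ᵥ (Λ⁻¹ *ᵥ b) := by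
    have hXr : (X' *ᵥ w0) ⬝ᵥ r = 0 := by
      rw [dotProduct_comm, Matrix.dotProduct_mulVec, ← Matrix.mulVec_transpose, horth]
      simp
    have hSr : XSᵀ *ᵥ r = Λ⁻¹ *ᵥ b := by
      show XSᵀ *ᵥ (XS *ᵥ b - X' *ᵥ w0) = _
      rw [Matrix.mulVec_sub, Matrix.mulVec_mulVec, Matrix.mulVec_mulVec]
      show D *ᵥ b - (XSᵀ * X') *ᵥ (A⁻¹ *ᵥ (B *ᵥ b)) = _
      rw [Matrix.mulVec_mulVec, Matrix.mulVec_mulVec, ← Matrix.sub_mulVec, hΛinv]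
    have h7 : r ⬝ᵥ r = (XS *ᵥ b) ⬝ᵥ r - (X' *ᵥ w0) ⬝ᵥ r := by
      show (XS *ᵥ b - X' *ᵥ w0) ⬝ᵥ r = _
      rw [sub_dotProduct]
    rw [h7, hXr, sub_zero, dotProduct_comm, Matrix.dotProduct_mulVec,
      ← Matrix.mulVec_transpose, hSr, dotProduct_comm]
  have hsq : ∀ y : Fin n → ℝ, ∑ i, (y i) ^ 2 = y ⬝ᵥ y := by
    intro y; simp [dotProduct, sq]
  apply IsLeast.csInf_eq
  constructor
  · refine ⟨vstar, hvstar_mem, ?_⟩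
    have h8 : ∑ i, (X.mulVec β i - vstar i) ^ 2 = r ⬝ᵥ r := by
      rw [← hsq r]
      exact Finset.sum_congr rfl fun i _ => by rw [hr' i]
    rw [h8, hrr]
  · rintro d ⟨v, hv, rfl⟩
    have hw : vstar - v ∈ Submodule.span ℝ
        (Set.range fun j : {j // j ∈ M'} => fun i : Fin n => X i (j : Fin p)) :=
      Submodule.sub_mem _ hvstar_mem hv
    have hperp2 : r ⬝ᵥ (vstar - v) = 0 := hperp _ hw
    have h9 : ∀ i, X.mulVec β i - v i = r i + (vstar i - v i) := by
      intro i; have := hr' i; linarith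
    have h10 : ∑ i, (X.mulVec β i - v i) ^ 2 =
        r ⬝ᵥ r + 2 * (r ⬝ᵥ (vstar - v)) + ∑ i, (vstar i - v i) ^ 2 := by
      simp_rw [h9, add_sq]
      rw [Finset.sum_add_distrib, Finset.sum_add_distrib, ← hsq r]
      have hmid : ∑ x : Fin n, 2 * r x * (vstar x - v x) = 2 * (r ⬝ᵥ (vstar - v)) := by
        simp only [dotProduct, Pi.sub_apply, Finset.mul_sum]
        exact Finset.sum_congr rfl fun i _ => by ring
      rw [hmid]
    rw [h10, hperp2, mul_zero, add_zero, ← hrr]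
    have h11 : 0 ≤ ∑ i, (vstar i - v i) ^ 2 :=
      Finset.sum_nonneg fun i _ => sq_nonneg _
    linarith
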